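/- Let n and k be integers with 0 ≤ k < n, and let A_1, …, A_k be finite subsets of Ω. Then ⋂_{i=1}^{k} (V_{A_i} + Ker β*_{n,n-1}) = (⋂_{i=1}^{k} V_{A_i}) + Ker β*_{n,n-1}, as subspaces of F_2^{[Ω]^{n-1}}. -/
import Mathlib


/-- The set of `m`-element subsets of `Ω`. -/
abbrev NSubsets (Ω : Type*) (m : ℕ) := {s : Finset Ω // s.card = m}

/-- The dual map `β*_{m,j} : F₂^{[Ω]^j} → F₂^{[Ω]^m}`,
`(β*_{m,j} f)(ω) = Σ_{x ∈ [ω]^j} f(x)`. -/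
noncomputable def betaStar (Ω : Type*) (m j : ℕ) :
    (NSubsets Ω j → ZMod 2) →ₗ[ZMod 2] (NSubsets Ω m → ZMod 2) where
  toFun f := fun ω => ∑ x ∈ (Finset.powersetCard j ω.1).attach,
      f ⟨x.1, (Finset.mem_powersetCard.mp x.2).2⟩
  map_add' f g := by
    funext ω
    simp [Finset.sum_add_distrib]
  map_smul' c f := by
    funext ω
    simp [Finset.mul_sum, smul_eq_mul]

/-- The map `β_{m,j} : F₂[Ω]^m → F₂[Ω]^j` on the free modules, sending a basis
element `ω ∈ [Ω]^m` to `Σ_{ω' ∈ [ω]^j} ω'`. -/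
noncomputable def beta (Ω : Type*) (m j : ℕ) :
    (NSubsets Ω m →₀ ZMod 2) →ₗ[ZMod 2] (NSubsets Ω j →₀ ZMod 2) :=
  Finsupp.lsum (ZMod 2) fun ω =>
    ∑ x ∈ (Finset.powersetCard j ω.1).attach,
      Finsupp.lsingle ⟨x.1, (Finset.mem_powersetCard.mp x.2).2⟩

/-- The natural action of a permutation of `Ω` on `m`-element subsets of `Ω`. -/
def permImage {Ω : Type*} [DecidableEq Ω] (σ : Equiv.Perm Ω) {n : ℕ}
    (w : NSubsets Ω n) : NSubsets Ω n :=
  ⟨w.1.image σ, by rw [Finset.card_image_of_injective _ σ.injective, w.2]⟩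

/-- `V_{B,A}`: functions on `[Ω]^{n-1}` vanishing at every `w` with `w ∩ A ≠ B`. -/
def VBA (Ω : Type*) [DecidableEq Ω] (n : ℕ) (A B : Finset Ω) :
    Submodule (ZMod 2) (NSubsets Ω (n - 1) → ZMod 2) where
  carrier := {f | ∀ w : NSubsets Ω (n - 1), w.1 ∩ A ≠ B → f w = 0}
  add_mem' := by
    intro f g hf hg w hw
    simp only [Pi.add_apply, hf w hw, hg w hw, add_zero]
  zero_mem' := fun w _ => rfl
  smul_mem' := by
    intro c f hf w hw
    simp only [Pi.smul_apply, hf w hw, smul_zero]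

/-- `V_A`: the sum of the subspaces `V_{B,A}` over `B ⊆ A` with `|B| < n - 1`. -/
def VA (Ω : Type*) [DecidableEq Ω] (n : ℕ) (A : Finset Ω) :
    Submodule (ZMod 2) (NSubsets Ω (n - 1) → ZMod 2) :=
  ⨆ B ∈ {B : Finset Ω | B ⊆ A ∧ B.card < n - 1}, VBA Ω n A B

/-- `W_A = β*_{n,n-1}(V_A)`. -/
noncomputable def WA (Ω : Type*) [DecidableEq Ω] (n : ℕ) (A : Finset Ω) :
    Submodule (ZMod 2) (NSubsets Ω n → ZMod 2) :=
  (VA Ω n A).map (betaStar Ω n (n - 1))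
set_option linter.unusedSectionVars false
open Finset
section Helpers
variable {Ω : Type} [DecidableEq Ω]

/-- Functions on `[Ω]^m` vanishing on `[A]^m`. -/
def Zv (Ω : Type) [DecidableEq Ω] (m : ℕ) (A : Finset Ω) :
    Submodule (ZMod 2) (NSubsets Ω m → ZMod 2) where
  carrier := {f | ∀ w : NSubsets Ω m, w.1 ⊆ A → f w = 0}
  add_mem' := by intro f g hf hg w hw; simp [hf w hw, hg w hw]
  zero_mem' := fun w _ => rfl
  smul_mem' := by intro c f hf w hw; simp [hf w hw]

lemma mem_Zv {m : ℕ} {A : Finset Ω} {f : NSubsets Ω m → ZMod 2} :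
    f ∈ Zv Ω m A ↔ ∀ w : NSubsets Ω m, w.1 ⊆ A → f w = 0 := Iff.rfl

noncomputable def extF {Ω : Type} (j : ℕ) (f : NSubsets Ω j → ZMod 2) : Finset Ω → ZMod 2 :=
  fun x => if h : x.card = j then f ⟨x, h⟩ else 0

lemma extF_val {j : ℕ} {f : NSubsets Ω j → ZMod 2} (w : NSubsets Ω j) :
    extF j f w.1 = f w := by
  simp [extF, w.2]

lemma betaStar_apply (m j : ℕ) (f : NSubsets Ω j → ZMod 2) (ω : NSubsets Ω m) :
    betaStar Ω m j f ω = ∑ x ∈ Finset.powersetCard j ω.1, extF j f x := by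
  rw [betaStar]
  dsimp only [LinearMap.coe_mk, AddHom.coe_mk]
  rw [← Finset.sum_attach (Finset.powersetCard j ω.1) (extF j f)]
  refine Finset.sum_congr rfl fun x _ => ?_
  exact (extF_val ⟨x.1, (Finset.mem_powersetCard.mp x.2).2⟩).symm

end Helpers
section Helpers3
variable {Ω : Type} [DecidableEq Ω]

lemma sum_pc_insert {z : Ω} {s : Finset Ω} (hz : z ∉ s) {t : ℕ} (hs : s.card = t + 1)
    (F : Finset Ω → ZMod 2) :
    ∑ x ∈ Finset.powersetCard (t+1) (insert z s), F x
      = F s + ∑ u ∈ Finset.powersetCard t s, F (insert z u) := by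
  rw [Finset.powersetCard_succ_insert hz]
  have h1 : Finset.powersetCard (t+1) s = {s} := by rw [← hs, Finset.powersetCard_self]
  have hdisj : Disjoint (Finset.powersetCard (t+1) s)
      ((Finset.powersetCard t s).image (insert z)) := by
    rw [h1]
    simp only [Finset.disjoint_singleton_left, Finset.mem_image, not_exists]
    rintro u ⟨hu, rfl⟩
    exact hz (Finset.mem_insert_self z u)
  rw [Finset.sum_union hdisj, h1, Finset.sum_singleton]
  congr 1
  rw [Finset.sum_image]
  intro u hu u' hu' h
  have hzu : z ∉ u := fun h' => hz ((Finset.mem_powersetCard.mp hu).1 h')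
  have hzu' : z ∉ u' := fun h' => hz ((Finset.mem_powersetCard.mp hu').1 h')
  have := congrArg (Finset.erase · z) h
  simpa [Finset.erase_insert, hzu, hzu'] using this

end Helpers3
section Helpers4
variable {Ω : Type} [DecidableEq Ω]

lemma zmod2_add_self : ∀ a : ZMod 2, a + a = 0 := by decide

lemma filter_superset_eq {v ω : Finset Ω} {j : ℕ} (hv : v ∈ Finset.powersetCard j ω) :
    (Finset.powersetCard (j+1) ω).filter (fun x => v ⊆ x)
      = (ω \ v).image (fun a => insert a v) := by
  obtain ⟨hvω, hvc⟩ := Finset.mem_powersetCard.mp hv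
  ext x
  simp only [Finset.mem_filter, Finset.mem_powersetCard, Finset.mem_image, Finset.mem_sdiff]
  constructor
  · rintro ⟨⟨hxω, hxc⟩, hvx⟩
    have hcd : (x \ v).card = 1 := by
      rw [Finset.card_sdiff_of_subset hvx, hxc, hvc]; omega
    obtain ⟨a, ha⟩ := Finset.card_eq_one.mp hcd
    have hav : a ∈ x \ v := ha ▸ Finset.mem_singleton_self a
    refine ⟨a, ⟨hxω (Finset.mem_sdiff.mp hav).1, (Finset.mem_sdiff.mp hav).2⟩, ?_⟩
    have := Finset.union_sdiff_of_subset hvx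
    rw [ha] at this
    rw [← this, Finset.union_comm]
    rfl
  · rintro ⟨a, ⟨haω, hav⟩, rfl⟩
    exact ⟨⟨Finset.insert_subset haω hvω, by rw [Finset.card_insert_of_notMem hav, hvc]⟩,
      Finset.subset_insert _ _⟩

lemma betaStar_comp_zero (j : ℕ) (H : NSubsets Ω j → ZMod 2) :
    betaStar Ω (j+2) (j+1) (betaStar Ω (j+1) j H) = 0 := by
  funext ω
  rw [betaStar_apply]
  have hstep : ∀ x ∈ Finset.powersetCard (j+1) ω.1,
      extF (j+1) (betaStar Ω (j+1) j H) x = ∑ v ∈ Finset.powersetCard j x, extF j H v := by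
    intro x hx
    have hxc := (Finset.mem_powersetCard.mp hx).2
    have : extF (j+1) (betaStar Ω (j+1) j H) x = betaStar Ω (j+1) j H ⟨x, hxc⟩ :=
      extF_val (⟨x, hxc⟩ : NSubsets Ω (j+1))
    rw [this, betaStar_apply]
  rw [Finset.sum_congr rfl hstep]
  rw [Finset.sum_comm' (t' := Finset.powersetCard j ω.1)
    (s' := fun v => (Finset.powersetCard (j+1) ω.1).filter (fun x => v ⊆ x)) ?_]
  · refine Finset.sum_eq_zero fun v hv => ?_
    rw [Finset.sum_const, filter_superset_eq hv, Finset.card_image_of_injOn, Finset.card_sdiff_of_subset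
      (Finset.mem_powersetCard.mp hv).1]
    · rw [ω.2, (Finset.mem_powersetCard.mp hv).2]
      have : j + 2 - j = 2 := by omega
      rw [this, two_nsmul, zmod2_add_self]
    · intro a ha b hb hab
      have hav : a ∉ v := (Finset.mem_sdiff.mp ha).2
      have hbv : b ∉ v := (Finset.mem_sdiff.mp hb).2
      have hab' : insert a v = insert b v := hab
      have : a ∈ insert b v := by rw [← hab']; exact Finset.mem_insert_self a v
      rcases Finset.mem_insert.mp this with h | h
      · exact h
      · exact absurd h hav
  · intro x v
    simp only [Finset.mem_powersetCard, Finset.mem_filter]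
    constructor
    · rintro ⟨⟨hxω, hxc⟩, hvx, hvc⟩
      exact ⟨⟨⟨hxω, hxc⟩, hvx⟩, ⟨hvx.trans hxω, hvc⟩⟩
    · rintro ⟨⟨⟨hxω, hxc⟩, hvx⟩, _, hvc⟩
      exact ⟨⟨hxω, hxc⟩, hvx, hvc⟩

end Helpers4
section Helpers5
variable {Ω : Type} [DecidableEq Ω]

lemma zmod2_eq_of_add_eq_zero : ∀ a b : ZMod 2, a + b = 0 → a = b := by decide

lemma cone (p : ℕ) (z : Ω) (g : NSubsets Ω (p+1) → ZMod 2)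
    (hg : g ∈ LinearMap.ker (betaStar Ω (p+2) (p+1)))
    (w : NSubsets Ω (p+1)) (hw : z ∉ w.1) :
    g w = ∑ u ∈ Finset.powersetCard p w.1, extF (p+1) g (insert z u) := by
  have hω : (insert z w.1).card = p + 2 := by rw [Finset.card_insert_of_notMem hw, w.2]
  have h0 : betaStar Ω (p+2) (p+1) g ⟨insert z w.1, hω⟩ = 0 := by
    rw [LinearMap.mem_ker] at hg
    rw [hg]; rfl
  rw [betaStar_apply] at h0
  dsimp only at h0
  rw [sum_pc_insert hw w.2, extF_val w] at h0
  exact zmod2_eq_of_add_eq_zero _ _ h0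

lemma exact_lemma (q : ℕ) (B : Finset Ω) (G : NSubsets Ω (q+1) → ZMod 2)
    (hG : ∀ w : NSubsets Ω (q+2), w.1 ⊆ B → betaStar Ω (q+2) (q+1) G w = 0) :
    G ∈ Zv Ω (q+1) B ⊔ LinearMap.ker (betaStar Ω (q+2) (q+1)) := by
  by_cases hB : B.card ≤ q
  · apply Submodule.mem_sup_left
    intro x hx
    have := Finset.card_le_card hx
    rw [x.2] at this
    omega
  · obtain ⟨z', hz'⟩ : ∃ z', z' ∈ B := Finset.card_pos.mp (by omega)
    set H : NSubsets Ω q → ZMod 2 := fun v =>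
      if h : z' ∈ v.1 then 0
      else G ⟨insert z' v.1, by rw [Finset.card_insert_of_notMem h, v.2]⟩ with hH
    set G₁ := betaStar Ω (q+1) q H with hG₁
    have hker : G₁ ∈ LinearMap.ker (betaStar Ω (q+2) (q+1)) := by
      rw [LinearMap.mem_ker, hG₁, betaStar_comp_zero]
    have hval : ∀ x : NSubsets Ω (q+1), x.1 ⊆ B → G₁ x = G x := by
      intro x hx
      rw [hG₁, betaStar_apply]
      by_cases hzx : z' ∈ x.1
      · rw [Finset.sum_eq_single_of_mem (x.1.erase z')
          (Finset.mem_powersetCard.mpr ⟨Finset.erase_subset _ _,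
            by rw [Finset.card_erase_of_mem hzx, x.2]; omega⟩)]
        · have hcc : (x.1.erase z').card = q := by
            rw [Finset.card_erase_of_mem hzx, x.2]; omega
          have : extF q H (x.1.erase z') = H ⟨x.1.erase z', hcc⟩ :=
            extF_val (⟨x.1.erase z', hcc⟩ : NSubsets Ω q)
          rw [this, hH]
          dsimp only
          rw [dif_neg (Finset.notMem_erase _ _)]
          congr 1
          exact Subtype.ext (Finset.insert_erase hzx)
        · intro v hv hne
          obtain ⟨hvx, hvc⟩ := Finset.mem_powersetCard.mp hv
          have : extF q H v = H ⟨v, hvc⟩ := extF_val (⟨v, hvc⟩ : NSubsets Ω q)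
          rw [this, hH]
          dsimp only
          rcases Decidable.em (z' ∈ v) with h | h
          · rw [dif_pos h]
          · exfalso
            apply hne
            apply Finset.eq_of_subset_of_card_le
            · intro a ha
              exact Finset.mem_erase.mpr ⟨fun he => h (he ▸ ha), hvx ha⟩
            · rw [Finset.card_erase_of_mem hzx, x.2, hvc]; omega
      · have hx2 : (insert z' x.1).card = q+2 := by
          rw [Finset.card_insert_of_notMem hzx, x.2]
        have h0 := hG ⟨insert z' x.1, hx2⟩ (Finset.insert_subset hz' hx)
        rw [betaStar_apply] at h0
        dsimp only at h0
        rw [sum_pc_insert hzx x.2, extF_val x] at h0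
        have hco : ∀ v ∈ Finset.powersetCard q x.1,
            extF q H v = extF (q+1) G (insert z' v) := by
          intro v hv
          obtain ⟨hvx, hvc⟩ := Finset.mem_powersetCard.mp hv
          have hzv : z' ∉ v := fun h => hzx (hvx h)
          have hivc : (insert z' v).card = q + 1 := by
            rw [Finset.card_insert_of_notMem hzv, hvc]
          have e1 : extF q H v = H ⟨v, hvc⟩ := extF_val (⟨v, hvc⟩ : NSubsets Ω q)
          have e2 : extF (q+1) G (insert z' v) = G ⟨insert z' v, hivc⟩ :=
            extF_val (⟨insert z' v, hivc⟩ : NSubsets Ω (q+1))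
          rw [e1, e2, hH]
          dsimp only
          rw [dif_neg hzv]
        rw [Finset.sum_congr rfl hco]
        exact (zmod2_eq_of_add_eq_zero _ _ h0).symm
    refine Submodule.mem_sup.mpr ⟨G + G₁, ?_, G₁, hker, ?_⟩
    · intro x hx
      show G x + G₁ x = 0
      rw [hval x hx, zmod2_add_self]
    · funext w
      show (G w + G₁ w) + G₁ w = G w
      rw [add_assoc, zmod2_add_self, add_zero]

end Helpers5
section Helpers6
variable {Ω : Type} [DecidableEq Ω]

lemma VA_eq (n : ℕ) (A : Finset Ω) : VA Ω n A = Zv Ω (n-1) A := by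
  apply le_antisymm
  · rw [VA]
    refine iSup₂_le fun B hB => ?_
    rw [SetLike.le_def]
    intro f hf w hw
    apply hf w
    intro h
    rw [Finset.inter_eq_left.mpr hw] at h
    have hB2 := hB.2
    rw [← h, w.2] at hB2
    omega
  · rw [SetLike.le_def]
    intro f hf
    have hf' : f = ∑ B ∈ (A.powerset.filter fun B => B.card < n-1),
        (fun w : NSubsets Ω (n-1) => if w.1 ∩ A = B then f w else 0) := by
      funext w
      rw [Finset.sum_apply]
      by_cases hsub : w.1 ⊆ A
      · rw [hf w hsub]
        symm
        apply Finset.sum_eq_zero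
        intro B hB
        apply if_neg
        intro h
        have hBc := (Finset.mem_filter.mp hB).2
        rw [Finset.inter_eq_left.mpr hsub] at h
        have hwc := w.2
        rw [h] at hwc
        omega
      · rw [Finset.sum_eq_single_of_mem (w.1 ∩ A) ?_ ?_]
        · rw [if_pos rfl]
        · refine Finset.mem_filter.mpr ⟨Finset.mem_powerset.mpr Finset.inter_subset_right, ?_⟩
          have hss : w.1 ∩ A ⊂ w.1 := by
            refine Finset.ssubset_iff_subset_ne.mpr ⟨Finset.inter_subset_left, ?_⟩
            intro h
            exact hsub (Finset.inter_eq_left.mp h)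
          have hlt := Finset.card_lt_card hss
          rw [w.2] at hlt
          omega
        · intro B _ hne
          exact if_neg fun h => hne h.symm
    rw [hf']
    apply Submodule.sum_mem
    intro B hB
    obtain ⟨hBp, hBc⟩ := Finset.mem_filter.mp hB
    have hmem : (fun w : NSubsets Ω (n-1) => if w.1 ∩ A = B then f w else 0)
        ∈ VBA Ω n A B := fun w hw => if_neg hw
    exact le_iSup₂ (f := fun (B : Finset Ω) (_ : B ∈ {B : Finset Ω | B ⊆ A ∧ B.card < n - 1})
      => VBA Ω n A B) B ⟨Finset.mem_powerset.mp hBp, hBc⟩ hmem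

end Helpers6
section MainInduction
variable {Ω : Type} [DecidableEq Ω] [Infinite Ω]

theorem main' : ∀ (k m : ℕ), k ≤ m → ∀ (A : Fin k → Finset Ω),
    (⨅ i, (Zv Ω m (A i) ⊔ LinearMap.ker (betaStar Ω (m+1) m)))
      = (⨅ i, Zv Ω m (A i)) ⊔ LinearMap.ker (betaStar Ω (m+1) m) := by
  intro k
  induction k with
  | zero =>
    intro m _ A
    rw [iInf_of_empty, iInf_of_empty, top_sup_eq]
  | succ k IH =>
    intro m hm A
    apply le_antisymm ?_ (le_iInf fun i => sup_le_sup_right (iInf_le _ i) _)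
    rw [SetLike.le_def]
    intro f hf
    rw [Submodule.mem_iInf] at hf
    have h1 : f ∈ (⨅ i : Fin k, Zv Ω m (A i.castSucc))
        ⊔ LinearMap.ker (betaStar Ω (m+1) m) := by
      rw [← IH m (by omega) (fun i => A i.castSucc), Submodule.mem_iInf]
      exact fun i => hf i.castSucc
    obtain ⟨v, hv, g, hg, hvg⟩ := Submodule.mem_sup.mp h1
    rw [Submodule.mem_iInf] at hv
    have h2 : v ∈ Zv Ω m (A (Fin.last k)) ⊔ LinearMap.ker (betaStar Ω (m+1) m) := by
      have hveq : v = f + g := by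
        rw [← hvg]; funext w
        show v w = (v w + g w) + g w
        rw [add_assoc, zmod2_add_self, add_zero]
      rw [hveq]
      exact Submodule.add_mem _ (hf (Fin.last k)) (Submodule.mem_sup_right hg)
    obtain ⟨v', hv', g'', hg'', hsum⟩ := Submodule.mem_sup.mp h2
    obtain ⟨p, rfl⟩ : ∃ p, m = p + 1 := ⟨m - 1, by omega⟩
    obtain ⟨z, hz⟩ := Infinite.exists_notMem_finset (Finset.univ.biUnion A)
    have hzA : ∀ (i : Fin (k+1)) (x : Finset Ω), x ⊆ A i → z ∉ x := by
      intro i x hx hzx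
      exact hz (Finset.mem_biUnion.mpr ⟨i, Finset.mem_univ i, hx hzx⟩)
    set G2 : NSubsets Ω p → ZMod 2 := fun u =>
      if h : z ∈ u.1 then 0 else extF (p+1) g'' (insert z u.1) with hG2def
    have hcone : ∀ w : NSubsets Ω (p+1), z ∉ w.1 →
        betaStar Ω (p+1) p G2 w = g'' w := by
      intro w hw
      rw [betaStar_apply]
      have hstep : ∀ u ∈ Finset.powersetCard p w.1,
          extF p G2 u = extF (p+1) g'' (insert z u) := by
        intro u hu
        obtain ⟨hus, huc⟩ := Finset.mem_powersetCard.mp hu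
        have hzu : z ∉ u := fun h => hw (hus h)
        rw [extF_val (⟨u, huc⟩ : NSubsets Ω p), hG2def]
        dsimp only
        rw [dif_neg hzu]
      rw [Finset.sum_congr rfl hstep]
      exact (cone p z g'' hg'' w hw).symm
    have hvlast : ∀ w : NSubsets Ω (p+1), w.1 ⊆ A (Fin.last k) → v w = g'' w := by
      intro w hw
      have : v w = v' w + g'' w := by rw [← hsum]; rfl
      rw [this, hv' w hw, zero_add]
    have hE : ∀ i : Fin k, G2 ∈ Zv Ω p (A i.castSucc ∩ A (Fin.last k))
        ⊔ LinearMap.ker (betaStar Ω (p+1) p) := by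
      intro i
      obtain ⟨q, hq⟩ : ∃ q, p = q + 1 := ⟨p - 1, by have := i.2; omega⟩
      subst hq
      apply exact_lemma
      intro w hw
      have hwz : z ∉ w.1 :=
        hzA i.castSucc w.1 (hw.trans Finset.inter_subset_left)
      rw [hcone w hwz, ← hvlast w (hw.trans Finset.inter_subset_right)]
      exact hv i w (hw.trans Finset.inter_subset_left)
    have h3 : G2 ∈ (⨅ i : Fin k, Zv Ω p (A i.castSucc ∩ A (Fin.last k)))
        ⊔ LinearMap.ker (betaStar Ω (p+1) p) := by
      rw [← IH p (by omega) (fun i => A i.castSucc ∩ A (Fin.last k)),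
        Submodule.mem_iInf]
      exact hE
    obtain ⟨u, hu, κ, hκ, huκ⟩ := Submodule.mem_sup.mp h3
    rw [Submodule.mem_iInf] at hu
    set uk : NSubsets Ω p → ZMod 2 :=
      fun x => if x.1 ⊆ A (Fin.last k) then u x else 0 with hukdef
    set gp : NSubsets Ω (p+1) → ZMod 2 := betaStar Ω (p+1) p (κ + uk) with hgp
    have hgpker : gp ∈ LinearMap.ker (betaStar Ω (p+2) (p+1)) := by
      rw [LinearMap.mem_ker, hgp, betaStar_comp_zero]
    have hκ0 : betaStar Ω (p+1) p κ = 0 := LinearMap.mem_ker.mp hκ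
    have hgpw : ∀ w, gp w = betaStar Ω (p+1) p uk w := by
      intro w
      rw [hgp, map_add]
      show betaStar Ω (p+1) p κ w + _ = _
      rw [hκ0]
      show (0 : ZMod 2) + _ = _
      rw [zero_add]
    have hc2 : ∀ w : NSubsets Ω (p+1), w.1 ⊆ A (Fin.last k) → gp w = v w := by
      intro w hw
      have huk : betaStar Ω (p+1) p uk w = betaStar Ω (p+1) p u w := by
        rw [betaStar_apply, betaStar_apply]
        refine Finset.sum_congr rfl fun y hy => ?_
        obtain ⟨hys, hyc⟩ := Finset.mem_powersetCard.mp hy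
        rw [extF_val (⟨y, hyc⟩ : NSubsets Ω p), extF_val (⟨y, hyc⟩ : NSubsets Ω p),
          hukdef]
        dsimp only
        rw [if_pos (hys.trans hw)]
      have hu2 : betaStar Ω (p+1) p u w = betaStar Ω (p+1) p G2 w := by
        rw [← huκ, map_add]
        show _ = betaStar Ω (p+1) p u w + betaStar Ω (p+1) p κ w
        rw [hκ0]
        show _ = _ + (0 : ZMod 2)
        rw [add_zero]
      rw [hgpw, huk, hu2, hcone w (hzA (Fin.last k) w.1 hw), hvlast w hw]
    have hc3 : ∀ (i : Fin k) (w : NSubsets Ω (p+1)), w.1 ⊆ A i.castSucc → gp w = 0 := by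
      intro i w hw
      rw [hgpw, betaStar_apply]
      apply Finset.sum_eq_zero
      intro y hy
      obtain ⟨hys, hyc⟩ := Finset.mem_powersetCard.mp hy
      rw [extF_val (⟨y, hyc⟩ : NSubsets Ω p), hukdef]
      dsimp only
      by_cases hyA : y ⊆ A (Fin.last k)
      · rw [if_pos hyA]
        exact hu i ⟨y, hyc⟩ (Finset.subset_inter (hys.trans hw) hyA)
      · rw [if_neg hyA]
    rw [Submodule.mem_sup]
    refine ⟨v + gp, ?_, g + gp, Submodule.add_mem _ hg hgpker, ?_⟩
    · rw [Submodule.mem_iInf]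
      intro i
      refine Fin.lastCases ?_ ?_ i
      · intro w hw
        show v w + gp w = 0
        rw [hc2 w hw, zmod2_add_self]
      · intro j w hw
        show v w + gp w = 0
        rw [hv j w hw, hc3 j w hw, add_zero]
    · funext w
      have hfw : f w = v w + g w := by rw [← hvg]; rfl
      show (v w + gp w) + (g w + gp w) = f w
      rw [hfw, add_add_add_comm, zmod2_add_self, add_zero]

end MainInduction
/-- For `0 ≤ k < n` and finite subsets `A₁, …, A_k` of `Ω`,
`⋂ᵢ (V_{Aᵢ} + Ker β*_{n,n-1}) = (⋂ᵢ V_{Aᵢ}) + Ker β*_{n,n-1}`. -/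
theorem iInf_VA_sup_ker
    (Ω : Type) [Countable Ω] [Infinite Ω] [DecidableEq Ω] (n k : ℕ) (hk : k < n)
    (A : Fin k → Finset Ω) :
    (⨅ i : Fin k, (VA Ω n (A i) ⊔ LinearMap.ker (betaStar Ω n (n - 1)))) =
      (⨅ i : Fin k, VA Ω n (A i)) ⊔ LinearMap.ker (betaStar Ω n (n - 1)) := by
  obtain ⟨m, rfl⟩ : ∃ m, n = m + 1 := ⟨n - 1, by omega⟩
  simp only [VA_eq, Nat.add_sub_cancel]
  exact main' k m (by omega) A
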